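/- Let n : ℕ, let f : EuclideanSpace ℝ (Fin n) → ℝ be differentiable with L-Lipschitz gradient (L ≥ 0), let S be a finite set of coordinates, and let (Ω, μ) be a probability space. Let g : Ω → EuclideanSpace ℝ (Fin n) with ω ↦ (g ω)∣S integrable, ω ↦ ‖(g ω)∣S‖^2 integrable, and ω ↦ f (x - γₜ • (g ω)∣S) integrable, where γₜ := α * γ. Let d := ∫ (g ω)∣S ∂μ and assume: (i) ∫ ‖(g ω)∣S - d‖^2 ∂μ ≤ σ^2; (ii) the alignment condition ⟪(gradient f x)∣S, d⟫ ≥ α * ‖d‖^2 with 0 < α ≤ 1; (iii) 0 < γ and γ * L ≤ 1. Then ∫ f (x - (α * γ) • (g ω)∣S) ∂μ ≤ f x - (γ / 2) * α^2 * ‖d‖^2 + (γ^2 * L / 2) * σ^2. -/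

import Mathlib

/-!
Smoothness gives the descent inequality `f (x + v) ≤ f x + ⟪∇f x, v⟫ + L/2 ‖v‖²`. Apply it to the
step `v = -αγ g∣S` and take expectations: the linear term becomes `-αγ ⟪∇f x, d⟫`, which only sees
the coordinates in `S` and so is bounded by the alignment condition, and the second moment of
`g∣S` splits into variance plus `‖d‖²`. Since `γL ≤ 1`, the `‖d‖²` part `Lα²γ²/2 ‖d‖²` of the
quadratic term eats at most half of the decrease `α²γ‖d‖²`.
-/

open MeasureTheory

/-- The masked vector `x∣S`: keeps coordinates in `S`, zeroes out the rest. -/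
def mask {n : ℕ} (S : Finset (Fin n)) (x : EuclideanSpace ℝ (Fin n)) :
    EuclideanSpace ℝ (Fin n) :=
  WithLp.toLp 2 (fun i => if i ∈ S then x i else 0)

section Smooth

variable {E : Type*} [NormedAddCommGroup E] [InnerProductSpace ℝ E] [CompleteSpace E]
  {f : E → ℝ} {L : ℝ}

theorem hasDerivAt_apply_add_smul {x v : E} {t : ℝ} (hf : DifferentiableAt ℝ f (x + t • v)) :
    HasDerivAt (fun s : ℝ => f (x + s • v)) (inner ℝ (gradient f (x + t • v)) v) t := by
  have hline : HasDerivAt (fun s : ℝ => x + s • v) v t := by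
    simpa using ((hasDerivAt_id t).smul_const v).const_add x
  have := hf.hasGradientAt.hasFDerivAt.comp_hasDerivAt t hline
  rwa [InnerProductSpace.toDual_apply_apply] at this

theorem apply_add_le_of_lipschitz_gradient (hf : Differentiable ℝ f)
    (hlip : ∀ x y, ‖gradient f x - gradient f y‖ ≤ L * ‖x - y‖) (x v : E) :
    f (x + v) ≤ f x + inner ℝ (gradient f x) v + L / 2 * ‖v‖ ^ 2 := by
  set ψ : ℝ → ℝ := fun t => f (x + t • v) - t * inner ℝ (gradient f x) v - L / 2 * t ^ 2 * ‖v‖ ^ 2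
  have hψ (t : ℝ) : HasDerivAt ψ
      (inner ℝ (gradient f (x + t • v)) v - inner ℝ (gradient f x) v - L * t * ‖v‖ ^ 2) t := by
    have hsq := ((hasDerivAt_pow 2 t).const_mul (L / 2)).mul_const (‖v‖ ^ 2)
    exact (((hasDerivAt_apply_add_smul (hf (x + t • v))).sub ((hasDerivAt_id t).mul_const _)).sub
      hsq).congr_deriv (by ring)
  have hψ_nonpos (t : ℝ) (ht : 0 ≤ t) :
      inner ℝ (gradient f (x + t • v)) v - inner ℝ (gradient f x) v - L * t * ‖v‖ ^ 2 ≤ 0 := by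
    have hgrad : ‖gradient f (x + t • v) - gradient f x‖ ≤ L * (t * ‖v‖) := by
      simpa [norm_smul, abs_of_nonneg ht] using hlip (x + t • v) x
    have := real_inner_le_norm (gradient f (x + t • v) - gradient f x) v
    rw [inner_sub_left] at this
    nlinarith [mul_le_mul_of_nonneg_right hgrad (norm_nonneg v)]
  have hanti : AntitoneOn ψ (Set.Icc 0 1) :=
    antitoneOn_of_hasDerivWithinAt_nonpos (convex_Icc 0 1)
      (fun t _ => (hψ t).continuousAt.continuousWithinAt)
      (fun t _ => (hψ t).hasDerivWithinAt)
      (fun t ht => hψ_nonpos t (by rw [interior_Icc] at ht; exact ht.1.le))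
  have := hanti (Set.left_mem_Icc.2 zero_le_one) (Set.right_mem_Icc.2 zero_le_one) zero_le_one
  simp only [ψ, zero_smul, add_zero, one_smul, zero_mul, sub_zero, one_pow, mul_one] at this
  linarith

variable {Ω : Type*} [MeasurableSpace Ω] {μ : Measure Ω} [IsProbabilityMeasure μ] {Y : Ω → E}

theorem integral_norm_sub_integral_sq (hY : Integrable Y μ)
    (hY₂ : Integrable (fun ω => ‖Y ω‖ ^ 2) μ) :
    ∫ ω, ‖Y ω - ∫ ω', Y ω' ∂μ‖ ^ 2 ∂μ = ∫ ω, ‖Y ω‖ ^ 2 ∂μ - ‖∫ ω, Y ω ∂μ‖ ^ 2 := by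
  set m := ∫ ω, Y ω ∂μ
  have hinner : Integrable (fun ω => 2 * inner ℝ m (Y ω)) μ := (hY.const_inner m).const_mul 2
  have hsub : Integrable (fun ω => ‖Y ω‖ ^ 2 - 2 * inner ℝ m (Y ω)) μ := hY₂.sub hinner
  simp_rw [norm_sub_sq_real, real_inner_comm m]
  rw [integral_add hsub (integrable_const _), integral_sub hY₂ hinner, integral_const_mul,
    integral_inner hY, real_inner_self_eq_norm_sq, integral_const, probReal_univ, one_smul]
  ring

theorem integral_apply_sub_smul_le (hf : Differentiable ℝ f)
    (hlip : ∀ x y, ‖gradient f x - gradient f y‖ ≤ L * ‖x - y‖) (x : E) (t : ℝ)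
    (hY : Integrable Y μ) (hY₂ : Integrable (fun ω => ‖Y ω‖ ^ 2) μ)
    (hfY : Integrable (fun ω => f (x - t • Y ω)) μ) :
    ∫ ω, f (x - t • Y ω) ∂μ ≤
      f x - t * inner ℝ (gradient f x) (∫ ω, Y ω ∂μ) + L * t ^ 2 / 2 * ∫ ω, ‖Y ω‖ ^ 2 ∂μ := by
  have hinner : Integrable (fun ω => t * inner ℝ (gradient f x) (Y ω)) μ :=
    (hY.const_inner (gradient f x)).const_mul t
  have hlin : Integrable (fun ω => f x - t * inner ℝ (gradient f x) (Y ω)) μ :=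
    (integrable_const _).sub hinner
  have hquad : Integrable (fun ω => L * t ^ 2 / 2 * ‖Y ω‖ ^ 2) μ := hY₂.const_mul _
  have hpoint (ω : Ω) : f (x - t • Y ω) ≤
      f x - t * inner ℝ (gradient f x) (Y ω) + L * t ^ 2 / 2 * ‖Y ω‖ ^ 2 := by
    have := apply_add_le_of_lipschitz_gradient hf hlip x (-(t • Y ω))
    rw [← sub_eq_add_neg, inner_neg_right, inner_smul_right, norm_neg, norm_smul,
      Real.norm_eq_abs, mul_pow, sq_abs] at this
    linarith
  calc ∫ ω, f (x - t • Y ω) ∂μ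
      ≤ ∫ ω, (f x - t * inner ℝ (gradient f x) (Y ω) + L * t ^ 2 / 2 * ‖Y ω‖ ^ 2) ∂μ :=
        integral_mono hfY (hlin.add hquad) hpoint
    _ = _ := by
      rw [integral_add hlin hquad, integral_sub (integrable_const _) hinner, integral_const_mul,
        integral_const_mul, integral_inner hY]
      simp

end Smooth

theorem inner_integral_mask {n : ℕ} (S : Finset (Fin n)) {Ω : Type*} [MeasurableSpace Ω]
    {μ : Measure Ω} {g : Ω → EuclideanSpace ℝ (Fin n)}
    (hg : Integrable (fun ω => mask S (g ω)) μ) (w : EuclideanSpace ℝ (Fin n)) :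
    inner ℝ w (∫ ω, mask S (g ω) ∂μ) = inner ℝ (mask S w) (∫ ω, mask S (g ω) ∂μ) := by
  have hmask (u : EuclideanSpace ℝ (Fin n)) :
      inner ℝ w (mask S u) = inner ℝ (mask S w) (mask S u) := by
    simp only [PiLp.inner_apply, RCLike.inner_apply, conj_trivial, mask]
    refine Finset.sum_congr rfl fun i _ => ?_
    split_ifs <;> simp
  simp_rw [← integral_inner hg, hmask]

/-- Lemma 1 (one-step lemma) of ProgFed: under the alignment condition with
coefficient `α ∈ (0,1]` and the step size `γₜ = α * γ` with `γ * L ≤ 1`, one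
masked stochastic gradient step on the `L`-smooth full objective decreases the
expected loss by `(γ/2) α² ‖d‖²` up to the noise term `(γ² L / 2) σ²`. -/
theorem progfed_one_step (n : ℕ) (f : EuclideanSpace ℝ (Fin n) → ℝ)
    (L : ℝ) (hL : 0 ≤ L) (hdiff : Differentiable ℝ f)
    (hlip : ∀ x y, ‖gradient f x - gradient f y‖ ≤ L * ‖x - y‖)
    (S : Finset (Fin n)) (Ω : Type*) [MeasurableSpace Ω]
    (μ : Measure Ω) [IsProbabilityMeasure μ]
    (g : Ω → EuclideanSpace ℝ (Fin n))
    (x : EuclideanSpace ℝ (Fin n)) (α γ σ : ℝ)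
    (hg₁ : Integrable (fun ω => mask S (g ω)) μ)
    (hg₂ : Integrable (fun ω => ‖mask S (g ω)‖ ^ 2) μ)
    (hg₃ : Integrable (fun ω => f (x - (α * γ) • mask S (g ω))) μ)
    (d : EuclideanSpace ℝ (Fin n)) (hd : d = ∫ ω, mask S (g ω) ∂μ)
    (hvar : ∫ ω, ‖mask S (g ω) - d‖ ^ 2 ∂μ ≤ σ ^ 2)
    (halign : (inner ℝ (mask S (gradient f x)) d : ℝ) ≥ α * ‖d‖ ^ 2)
    (hα₀ : 0 < α) (hα₁ : α ≤ 1) (hγ : 0 < γ) (hγL : γ * L ≤ 1) :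
    ∫ ω, f (x - (α * γ) • mask S (g ω)) ∂μ ≤
      f x - (γ / 2) * α ^ 2 * ‖d‖ ^ 2 + (γ ^ 2 * L / 2) * σ ^ 2 := by
  have hdescent := integral_apply_sub_smul_le hdiff hlip x (α * γ) hg₁ hg₂ hg₃
  rw [inner_integral_mask S hg₁, ← hd] at hdescent
  have hmoment : ∫ ω, ‖mask S (g ω)‖ ^ 2 ∂μ ≤ σ ^ 2 + ‖d‖ ^ 2 := by
    have := integral_norm_sub_integral_sq hg₁ hg₂
    rw [← hd] at this
    linarith
  calc ∫ ω, f (x - (α * γ) • mask S (g ω)) ∂μ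
      ≤ f x - α * γ * (α * ‖d‖ ^ 2) + L * (α * γ) ^ 2 / 2 * (σ ^ 2 + ‖d‖ ^ 2) := by
        refine hdescent.trans ?_
        gcongr
    _ ≤ f x - (γ / 2) * α ^ 2 * ‖d‖ ^ 2 + (γ ^ 2 * L / 2) * σ ^ 2 := by
        have hα₂ : α ^ 2 ≤ 1 := pow_le_one₀ hα₀.le hα₁
        linarith [mul_nonneg (mul_nonneg (by positivity : 0 ≤ γ ^ 2 * L) (sub_nonneg.2 hα₂))
            (sq_nonneg σ),
          mul_nonneg (by positivity : 0 ≤ α ^ 2 * γ * ‖d‖ ^ 2) (sub_nonneg.2 hγL)]
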